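/- arXiv:2004.11101 — 4 statements merged into one kernel-verified Lean document; each statement's English description precedes it below -/
import Mathlib

section
/- Let X be a countably infinite discrete topological space. Then there exists a family, of the cardinality of the continuum, of pairwise non-homeomorphic compact metrizable topological spaces K, each of cardinality continuum, such that each K contains a dense subspace homeomorphic to X (i.e., each K is a metrizable compactification of X). -/
/-!
Every nonempty compact separable space `M` is the remainder of a compactification of `ℕ`: in
`M × ℝ`, put above the terms of a dense sequence of `M` isolated points at heights `2⁻ᵘ → 0`. The
remainder `M × {0}` is recovered from the compactification as its set of non-isolated points, so
it suffices to find continuum many pairwise non-homeomorphic compact metric spaces of size `𝔠`.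

For `A ⊆ ℕ` take a comb in the plane: vertical teeth at `x = 2⁻ⁿ` shrinking to the origin, where
for `n ∈ A` the `n`-th tooth is approached from the right by sequences of isolated points
converging to exactly `n + 1` of its points. As the first coordinates of the comb form a countable
set, its nondegenerate connected components are exactly the teeth, and the sizes of their
frontiers recover `A`.
-/

open Set Filter Topology TopologicalSpace

noncomputable section

def halfPow (n : ℕ) : ℝ := 2⁻¹ ^ n

theorem halfPow_pos (n : ℕ) : 0 < halfPow n := by unfold halfPow; positivity

theorem halfPow_le_one (n : ℕ) : halfPow n ≤ 1 := pow_le_one₀ (by norm_num) (by norm_num)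

theorem halfPow_le_half_of_lt {m n : ℕ} (h : m < n) : halfPow n ≤ halfPow m / 2 := by
  rw [halfPow, halfPow, div_eq_mul_inv, ← pow_succ]
  exact pow_le_pow_of_le_one (by norm_num) (by norm_num) h

theorem halfPow_antitone : Antitone halfPow := fun _ _ h =>
  pow_le_pow_of_le_one (by norm_num) (by norm_num) h

theorem halfPow_add_two (n : ℕ) : halfPow (n + 2) = halfPow n / 4 := by
  rw [halfPow, halfPow, pow_add]
  norm_num [div_eq_mul_inv]

theorem halfPow_injective : Function.Injective halfPow :=
  pow_right_injective₀ (by norm_num) (by norm_num)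

theorem tendsto_halfPow_atTop : Tendsto halfPow atTop (𝓝 0) :=
  tendsto_pow_atTop_nhds_zero_of_lt_one (by norm_num) (by norm_num)

theorem eq_of_halfPow_mem_Ioo {m n : ℕ} (h : halfPow m ∈ Ioo (halfPow n / 2) (2 * halfPow n)) :
    m = n := by
  rcases lt_trichotomy m n with hmn | rfl | hnm
  · linarith [h.2, halfPow_le_half_of_lt hmn]
  · rfl
  · linarith [h.1, halfPow_le_half_of_lt hnm]

theorem IsCompact.union_iUnion_of_tendsto_smallSets {X : Type*} [TopologicalSpace X]
    {J : Set X} {T : ℕ → Set X} (hJ : IsCompact J) (hT : ∀ n, IsCompact (T n))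
    (hlim : Tendsto T atTop (𝓝ˢ J).smallSets) : IsCompact (J ∪ ⋃ n, T n) := by
  rw [isCompact_iff_finite_subcover]
  intro ι U hU hcover
  obtain ⟨t₀, ht₀⟩ := hJ.elim_finite_subcover U hU (subset_union_left.trans hcover)
  obtain ⟨N, hN⟩ := eventually_atTop.1 <| tendsto_smallSets_iff.1 hlim _ <|
    (isOpen_biUnion fun i _ => hU i).mem_nhdsSet.2 ht₀
  choose t ht using fun n => (hT n).elim_finite_subcover U hU
    ((subset_iUnion T n).trans (subset_union_right.trans hcover))
  classical
  refine ⟨t₀ ∪ (Finset.range N).biUnion t, ?_⟩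
  rintro x (hx | hx)
  · exact biUnion_mono Finset.subset_union_left (fun _ _ => le_rfl) (ht₀ hx)
  obtain ⟨n, hn⟩ := mem_iUnion.1 hx
  rcases lt_or_ge n N with hnN | hNn
  · refine biUnion_mono ?_ (fun _ _ => le_rfl) (ht n hn)
    exact (Finset.subset_biUnion_of_mem t (Finset.mem_range.2 hnN)).trans Finset.subset_union_right
  · exact biUnion_mono Finset.subset_union_left (fun _ _ => le_rfl) (hN n hNn hn)

theorem isOpenEmbedding_of_isOpen_singleton {X Y : Type*} [TopologicalSpace X] [DiscreteTopology X]
    [TopologicalSpace Y] {f : X → Y} (hf : Function.Injective f) (hopen : ∀ x, IsOpen {f x}) :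
    IsOpenEmbedding f := by
  refine .of_continuous_injective_isOpenMap continuous_of_discreteTopology hf fun s _ => ?_
  rw [← biUnion_of_singleton s, image_iUnion₂]
  simpa only [image_singleton] using isOpen_biUnion fun x _ => hopen x

def nonIsolatedPoints (Y : Type*) [TopologicalSpace Y] : Set Y := {y | ¬IsOpen ({y} : Set Y)}

def Homeomorph.nonIsolatedPoints {Y Z : Type*} [TopologicalSpace Y] [TopologicalSpace Z]
    (h : Y ≃ₜ Z) : nonIsolatedPoints Y ≃ₜ nonIsolatedPoints Z :=
  h.sets <| by ext y; simp [_root_.nonIsolatedPoints, ← h.isOpen_image]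

/-- `ncard` is `0` on infinite sets, so `m ≠ 0` discards infinite frontiers along with empty
ones. -/
def componentFrontierCards (Y : Type*) [TopologicalSpace Y] : Set ℕ :=
  {m | m ≠ 0 ∧ ∃ y : Y, (connectedComponent y).Nontrivial ∧
    (frontier (connectedComponent y)).ncard = m}

theorem Homeomorph.image_connectedComponent {Y Z : Type*} [TopologicalSpace Y] [TopologicalSpace Z]
    (h : Y ≃ₜ Z) (y : Y) : h '' connectedComponent y = connectedComponent (h y) := by
  simpa [connectedComponentIn_univ] using h.image_connectedComponentIn (mem_univ y)

theorem Homeomorph.componentFrontierCards_subset {Y Z : Type*} [TopologicalSpace Y]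
    [TopologicalSpace Z] (h : Y ≃ₜ Z) : componentFrontierCards Y ⊆ componentFrontierCards Z := by
  rintro m ⟨hm, y, hnt, rfl⟩
  refine ⟨hm, h y, ?_, ?_⟩
  · rw [← h.image_connectedComponent]
    exact hnt.image h.injective
  · rw [← h.image_connectedComponent, ← h.image_frontier, ncard_image_of_injective _ h.injective]

theorem Homeomorph.componentFrontierCards_eq {Y Z : Type*} [TopologicalSpace Y]
    [TopologicalSpace Z] (h : Y ≃ₜ Z) : componentFrontierCards Y = componentFrontierCards Z :=
  h.componentFrontierCards_subset.antisymm h.symm.componentFrontierCards_subset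

theorem IsClosed.image_val_frontier {X : Type*} [TopologicalSpace X] {S : Set X}
    (hS : IsClosed S) (t : Set S) :
    Subtype.val '' frontier t = closure (Subtype.val '' t) ∩ closure (S \ Subtype.val '' t) := by
  rw [frontier_eq_closure_inter_closure, image_inter Subtype.val_injective, ← image_val_compl,
    hS.isClosedEmbedding_subtypeVal.closure_image_eq,
    hS.isClosedEmbedding_subtypeVal.closure_image_eq]

theorem IsClosed.componentFrontierCards_subtype {X : Type*} [TopologicalSpace X] {S : Set X}
    (hS : IsClosed S) : componentFrontierCards S = {m | m ≠ 0 ∧ ∃ y ∈ S,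
      (connectedComponentIn S y).Nontrivial ∧
      (closure (connectedComponentIn S y) ∩ closure (S \ connectedComponentIn S y)).ncard = m} := by
  have nontrivial_iff (y : S) :
      (connectedComponent y).Nontrivial ↔ (connectedComponentIn S y).Nontrivial := by
    rw [connectedComponentIn_eq_image y.2, image_nontrivial Subtype.val_injective]
  have ncard_eq (y : S) : (frontier (connectedComponent y)).ncard =
      (closure (connectedComponentIn S y) ∩ closure (S \ connectedComponentIn S y)).ncard := by
    rw [connectedComponentIn_eq_image y.2, ← hS.image_val_frontier,
      ncard_image_of_injective _ Subtype.val_injective]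
  ext m
  simp only [componentFrontierCards, mem_ofPred_eq, Subtype.exists, nontrivial_iff, ncard_eq,
    exists_prop]

section NatCompactification

variable (M : Type*) [TopologicalSpace M] [SeparableSpace M] [Nonempty M]

/-- Pairing puts infinitely many of these points above each term of the dense sequence. -/
def natCompactificationPoint (u : ℕ) : M × ℝ := (denseSeq M u.unpair.1, halfPow u)

def natCompactification : Set (M × ℝ) := univ ×ˢ {0} ∪ range (natCompactificationPoint M)

def natCompactification.ofNat (u : ℕ) : natCompactification M :=
  ⟨natCompactificationPoint M u, Or.inr ⟨u, rfl⟩⟩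

variable {M}

namespace natCompactification

theorem _root_.isCompact_natCompactification [CompactSpace M] :
    IsCompact (natCompactification M) := by
  rw [natCompactification, ← iUnion_singleton_eq_range]
  refine (isCompact_univ.prod isCompact_singleton).union_iUnion_of_tendsto_smallSets
    (fun _ => isCompact_singleton) (tendsto_smallSets_iff.2 fun t ht => ?_)
  rw [isCompact_univ.nhdsSet_prod_eq isCompact_singleton, nhdsSet_univ, nhdsSet_singleton] at ht
  have hlim : Tendsto (natCompactificationPoint M) atTop (⊤ ×ˢ 𝓝 0) :=
    tendsto_top.prodMk tendsto_halfPow_atTop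
  exact (hlim.eventually_mem ht).mono fun _ => singleton_subset_iff.2

theorem ofNat_injective : Function.Injective (ofNat M) := fun _ _ h =>
  halfPow_injective (congrArg (fun y : natCompactification M => (y : M × ℝ).2) h)

theorem isOpen_singleton_ofNat (u : ℕ) : IsOpen {ofNat M u} := by
  have hpos := halfPow_pos u
  have : {ofNat M u} = Subtype.val ⁻¹' (univ ×ˢ Ioo (halfPow u / 2) (2 * halfPow u)) := by
    ext ⟨p, hp⟩
    simp only [mem_singleton_iff, mem_preimage, mem_prod, mem_univ, true_and, Subtype.ext_iff,
      ofNat]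
    constructor
    · rintro rfl
      constructor <;> simp only [natCompactificationPoint] <;> linarith
    · rcases hp with ⟨-, h0⟩ | ⟨w, rfl⟩ <;> intro h
      · linarith [h.1, show p.2 = 0 from h0]
      · rw [eq_of_halfPow_mem_Ioo h]
  rw [this]
  exact (isOpen_univ.prod isOpen_Ioo).preimage continuous_subtype_val

theorem mem_closure_range_of_snd_eq_zero {p : M × ℝ} (hp : p.2 = 0) :
    p ∈ closure (range (natCompactificationPoint M)) := by
  have hlim (a : ℕ) : (denseSeq M a, (0 : ℝ)) ∈ closure (range (natCompactificationPoint M)) := by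
    have hpair : Tendsto (fun j => natCompactificationPoint M (Nat.pair a j)) atTop
        (𝓝 (denseSeq M a, 0)) := by
      simp only [natCompactificationPoint, Nat.unpair_pair]
      exact tendsto_const_nhds.prodMk_nhds
        (tendsto_halfPow_atTop.comp (tendsto_atTop_mono (Nat.right_le_pair a) tendsto_id))
    exact mem_closure_of_tendsto hpair (Eventually.of_forall fun j => mem_range_self _)
  rw [← closure_closure (s := range _), ← Prod.mk.eta (p := p), hp]
  exact map_mem_closure (f := fun m : M => (m, (0 : ℝ))) (by fun_prop) (denseRange_denseSeq M p.1)
    fun _ ⟨a, ha⟩ => ha ▸ hlim a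

theorem denseRange_ofNat : DenseRange (ofNat M) := by
  rw [DenseRange, Subtype.dense_iff, ← range_comp]
  rintro p (⟨-, hp⟩ | hp)
  · exact mem_closure_range_of_snd_eq_zero hp
  · exact subset_closure hp

theorem isOpenEmbedding_ofNat_comp {X : Type*} [TopologicalSpace X] [DiscreteTopology X] {g : X → ℕ}
    (hg : Function.Injective g) : IsOpenEmbedding (ofNat M ∘ g) :=
  isOpenEmbedding_of_isOpen_singleton (ofNat_injective.comp hg) fun _ => isOpen_singleton_ofNat _

theorem mem_nonIsolatedPoints_iff {y : natCompactification M} :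
    y ∈ nonIsolatedPoints _ ↔ (y : M × ℝ).2 = 0 := by
  constructor
  · intro hy
    obtain ⟨-, h0⟩ | ⟨u, hu⟩ := y.2
    · exact h0
    · rw [Subtype.ext (a1 := y) (a2 := ofNat M u) hu.symm] at hy
      exact absurd (isOpen_singleton_ofNat u) hy
  · intro h0 hopen
    obtain ⟨u, rfl⟩ := denseRange_ofNat.exists_mem_open hopen (singleton_nonempty y)
    exact (halfPow_pos u).ne' h0

def nonIsolatedPointsHomeomorph : nonIsolatedPoints (natCompactification M) ≃ₜ M where
  toFun y := y.1.1.1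
  invFun m := ⟨⟨(m, 0), Or.inl ⟨mem_univ m, rfl⟩⟩, mem_nonIsolatedPoints_iff.2 rfl⟩
  left_inv y := Subtype.ext <| Subtype.ext <| Prod.ext rfl (mem_nonIsolatedPoints_iff.1 y.2).symm
  right_inv _ := rfl
  continuous_toFun := by fun_prop
  continuous_invFun := by fun_prop

def remainderHomeomorph {N : Type*} [TopologicalSpace N] [SeparableSpace N] [Nonempty N]
    (h : natCompactification M ≃ₜ natCompactification N) : M ≃ₜ N :=
  nonIsolatedPointsHomeomorph.symm.trans (h.nonIsolatedPoints.trans nonIsolatedPointsHomeomorph)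

open Cardinal in
theorem mk_eq_continuum (hM : #M = 𝔠) : #(natCompactification M) = 𝔠 := by
  refine le_antisymm ?_ ?_
  · calc #(natCompactification M) ≤ #(M × ℝ) := mk_set_le _
      _ = 𝔠 := by simp [hM, mk_real]
  · calc 𝔠 = #(nonIsolatedPoints (natCompactification M)) :=
          hM.symm.trans (mk_congr nonIsolatedPointsHomeomorph.toEquiv).symm
      _ ≤ #(natCompactification M) := mk_set_le _

end natCompactification

end NatCompactification

namespace comb

def tooth (n : ℕ) : Set (ℝ × ℝ) := {halfPow n} ×ˢ Icc 0 (halfPow n)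

/-- `c n` rows of points accumulating, from the right, at the `c n` points `tops c n` of
`tooth n`; the row parameter `0` gives these limit points themselves. -/
def whiskers (c : ℕ → ℕ) (n : ℕ) : Set (ℝ × ℝ) :=
  (fun q : ℝ × ℕ => (halfPow n + halfPow (n + 2) * q.1, halfPow (n + q.2))) ''
    (insert 0 (range halfPow) ×ˢ Iio (c n))

def tops (c : ℕ → ℕ) (n : ℕ) : Set (ℝ × ℝ) :=
  (fun i => (halfPow n, halfPow (n + i))) '' Iio (c n)

end comb

open comb in
def comb (c : ℕ → ℕ) : Set (ℝ × ℝ) := insert 0 (⋃ n, tooth n ∪ whiskers c n)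

namespace comb

variable {c : ℕ → ℕ}

theorem tooth_subset (c : ℕ → ℕ) (n : ℕ) : tooth n ⊆ comb c :=
  fun _ hp => mem_insert_of_mem _ (mem_iUnion.2 ⟨n, Or.inl hp⟩)

theorem isCompact_tooth (n : ℕ) : IsCompact (tooth n) := isCompact_singleton.prod isCompact_Icc

theorem isCompact_whiskers (c : ℕ → ℕ) (n : ℕ) : IsCompact (whiskers c n) :=
  (tendsto_halfPow_atTop.isCompact_insert_range.prod (finite_Iio _).isCompact).image <|
    (continuous_const.add (continuous_const.mul continuous_fst)).prodMk
      ((continuous_of_discreteTopology (f := fun i : ℕ => halfPow (n + i))).comp continuous_snd)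

theorem countable_whiskers (c : ℕ → ℕ) (n : ℕ) : (whiskers c n).Countable :=
  (((countable_range halfPow).insert 0).prod (finite_Iio _).countable).image _

theorem tooth_union_whiskers_subset (c : ℕ → ℕ) (n : ℕ) :
    tooth n ∪ whiskers c n ⊆
      Icc (halfPow n) (halfPow n + halfPow (n + 2)) ×ˢ Icc 0 (halfPow n) := by
  have hpos := halfPow_pos (n + 2)
  rintro p (⟨hp1, hp2⟩ | ⟨⟨s, i⟩, ⟨hs, -⟩, rfl⟩)
  · rw [mem_singleton_iff] at hp1
    exact ⟨⟨hp1.ge, by linarith⟩, hp2⟩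
  · have ⟨hs0, hs1⟩ : 0 ≤ s ∧ s ≤ 1 := by
      rcases hs with rfl | ⟨k, rfl⟩
      exacts [⟨le_rfl, zero_le_one⟩, ⟨(halfPow_pos k).le, halfPow_le_one k⟩]
    refine ⟨⟨?_, ?_⟩, (halfPow_pos _).le, halfPow_antitone (Nat.le_add_right n i)⟩ <;> nlinarith

theorem fst_notMem_Ioo_of_ne {m n : ℕ} (hmn : m ≠ n) {x : ℝ}
    (hx : x ∈ Icc (halfPow m) (halfPow m + halfPow (m + 2))) :
    x ∉ Ioo (5 / 8 * halfPow n) (2 * halfPow n) := by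
  rw [halfPow_add_two] at hx
  rintro ⟨h1, h2⟩
  rcases hmn.lt_or_gt with h | h
  · linarith [hx.1, halfPow_le_half_of_lt h]
  · linarith [hx.2, halfPow_le_half_of_lt h]

theorem _root_.isCompact_comb (c : ℕ → ℕ) : IsCompact (comb c) := by
  rw [comb, insert_eq]
  refine isCompact_singleton.union_iUnion_of_tendsto_smallSets
    (fun n => (isCompact_tooth n).union (isCompact_whiskers c n)) ?_
  have hball : Tendsto (fun n => Metric.closedBall (0 : ℝ × ℝ) (2 * halfPow n)) atTop
      (𝓝ˢ {(0 : ℝ × ℝ)}).smallSets := by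
    rw [nhdsSet_singleton]
    refine (tendsto_closedBall_smallSets _).comp ?_
    simpa using tendsto_halfPow_atTop.const_mul 2
  refine hball.smallSets_mono (Eventually.of_forall fun n p hp => ?_)
  obtain ⟨⟨hx1, hx2⟩, hy1, hy2⟩ := tooth_union_whiskers_subset c n hp
  have := halfPow_pos n
  rw [halfPow_add_two] at hx2
  rw [Metric.mem_closedBall, dist_zero_right, norm_prod_le_iff, Real.norm_eq_abs,
    Real.norm_eq_abs, abs_le, abs_le]
  refine ⟨⟨?_, ?_⟩, ?_, ?_⟩ <;> linarith

instance : Nonempty (comb c) := ⟨⟨0, mem_insert _ _⟩⟩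

instance : CompactSpace (comb c) := isCompact_iff_compactSpace.1 (isCompact_comb c)

open Cardinal in
theorem mk_eq_continuum (c : ℕ → ℕ) : #(comb c) = 𝔠 := by
  refine le_antisymm ((mk_set_le _).trans (by simp [mk_real])) ?_
  calc 𝔠 = #(Icc (0 : ℝ) (halfPow 0)) := (mk_Icc_real (halfPow_pos 0)).symm
    _ ≤ #(comb c) :=
      mk_le_of_injective (f := fun t => ⟨(halfPow 0, t), tooth_subset c 0 ⟨rfl, t.2⟩⟩)
        fun _ _ h => Subtype.ext (congrArg (fun p : comb c => (p : ℝ × ℝ).2) h)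

theorem mem_tooth_of_fst_eq {p : ℝ × ℝ} (hp : p ∈ comb c) {n : ℕ} (hx : p.1 = halfPow n) :
    p ∈ tooth n := by
  have hpos := halfPow_pos n
  rcases hp with rfl | hp
  · exact absurd hx.symm hpos.ne'
  obtain ⟨m, hm⟩ := mem_iUnion.1 hp
  obtain ⟨hx', hy⟩ := tooth_union_whiskers_subset c m hm
  obtain rfl : m = n := by
    by_contra hmn
    exact fst_notMem_Ioo_of_ne hmn hx' (hx ▸ ⟨by linarith, by linarith⟩)
  exact ⟨hx, hy⟩

theorem countable_diff_teeth (c : ℕ → ℕ) : (comb c \ ⋃ n, tooth n).Countable := by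
  refine ((countable_iUnion (countable_whiskers c)).insert 0).mono ?_
  rintro p ⟨rfl | hp, hnot⟩
  · exact mem_insert _ _
  obtain ⟨n, hn | hn⟩ := mem_iUnion.1 hp
  · exact absurd (mem_iUnion.2 ⟨n, hn⟩) hnot
  · exact mem_insert_of_mem _ (mem_iUnion.2 ⟨n, hn⟩)

theorem countable_fst_image (c : ℕ → ℕ) : (Prod.fst '' comb c).Countable := by
  refine ((countable_range halfPow).union ((countable_diff_teeth c).image Prod.fst)).mono ?_
  rintro _ ⟨p, hp, rfl⟩
  by_cases ht : p ∈ ⋃ n, tooth n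
  · obtain ⟨n, hn⟩ := mem_iUnion.1 ht
    exact Or.inl ⟨n, (mem_singleton_iff.1 hn.1).symm⟩
  · exact Or.inr ⟨p, ⟨hp, ht⟩, rfl⟩

theorem fst_eq_of_mem_connectedComponentIn {p q : ℝ × ℝ} (hp : p ∈ comb c)
    (hq : q ∈ connectedComponentIn (comb c) p) : q.1 = p.1 :=
  ((countable_fst_image c).mono (image_mono (connectedComponentIn_subset _ _)))
    |>.isTotallyDisconnected _ subset_rfl
      (isPreconnected_connectedComponentIn.image _ continuous_fst.continuousOn)
      (mem_image_of_mem _ hq) (mem_image_of_mem _ (mem_connectedComponentIn hp))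

theorem connectedComponentIn_eq_tooth {p : ℝ × ℝ} {n : ℕ} (hp : p ∈ tooth n) :
    connectedComponentIn (comb c) p = tooth n := by
  refine subset_antisymm (fun q hq => ?_) ?_
  · refine mem_tooth_of_fst_eq (connectedComponentIn_subset _ _ hq) ?_
    rw [fst_eq_of_mem_connectedComponentIn (tooth_subset c n hp) hq]
    exact mem_singleton_iff.1 hp.1
  · exact (isPreconnected_singleton.prod isPreconnected_Icc).subset_connectedComponentIn hp
      (tooth_subset c n)

theorem subsingleton_connectedComponentIn {p : ℝ × ℝ} (hp : p ∈ comb c)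
    (hnot : ∀ n, p ∉ tooth n) : (connectedComponentIn (comb c) p).Subsingleton := by
  have hsub : connectedComponentIn (comb c) p ⊆ comb c \ ⋃ n, tooth n := by
    refine fun q hq => ⟨connectedComponentIn_subset _ _ hq, ?_⟩
    simp only [mem_iUnion, not_exists]
    intro n hqn
    refine hnot n (mem_tooth_of_fst_eq hp ?_)
    rw [← fst_eq_of_mem_connectedComponentIn hp hq]
    exact mem_singleton_iff.1 hqn.1
  exact ((countable_diff_teeth c).mono hsub).isTotallyDisconnected _ subset_rfl
    isPreconnected_connectedComponentIn

theorem tooth_inter_closure_diff (c : ℕ → ℕ) (n : ℕ) :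
    tooth n ∩ closure (comb c \ tooth n) = tops c n := by
  have hpos := halfPow_pos n
  refine subset_antisymm ?_ fun p hp => ⟨?_, ?_⟩
  · let F := (Prod.fst ⁻¹' Ioo (5 / 8 * halfPow n) (2 * halfPow n))ᶜ ∪ whiskers c n
    have hF : IsClosed F := (isOpen_Ioo.preimage continuous_fst).isClosed_compl.union
      (isCompact_whiskers c n).isClosed
    have hsub : comb c \ tooth n ⊆ F := by
      rintro p ⟨rfl | hp, hpn⟩
      · refine Or.inl fun h => ?_
        have : 5 / 8 * halfPow n < 0 := h.1
        linarith
      obtain ⟨m, hm⟩ := mem_iUnion.1 hp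
      by_cases hmn : m = n
      · subst hmn
        exact Or.inr (hm.resolve_left hpn)
      · exact Or.inl (fst_notMem_Ioo_of_ne hmn (tooth_union_whiskers_subset c m hm).1)
    rintro p ⟨⟨hx, -⟩, hp⟩
    rw [mem_singleton_iff] at hx
    rcases closure_minimal hsub hF hp with h | ⟨⟨s, i⟩, ⟨-, hi⟩, rfl⟩
    · exact absurd ⟨by rw [hx]; linarith, by rw [hx]; linarith⟩ h
    · have hs : s = 0 := by simpa [(halfPow_pos _).ne'] using hx
      exact ⟨i, hi, by simp [hs]⟩
  · obtain ⟨i, -, rfl⟩ := hp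
    exact ⟨rfl, (halfPow_pos _).le, halfPow_antitone (Nat.le_add_right n i)⟩
  · obtain ⟨i, hi, rfl⟩ := hp
    have hlim : Tendsto (fun k => (halfPow n + halfPow (n + 2) * halfPow k, halfPow (n + i)))
        atTop (𝓝 (halfPow n, halfPow (n + i))) := by
      refine Tendsto.prodMk_nhds ?_ tendsto_const_nhds
      simpa using (tendsto_halfPow_atTop.const_mul (halfPow (n + 2))).const_add (halfPow n)
    refine mem_closure_of_tendsto hlim (Eventually.of_forall fun k => ⟨?_, fun hk => ?_⟩)
    · exact mem_insert_of_mem _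
        (mem_iUnion.2 ⟨n, Or.inr ⟨(halfPow k, i), ⟨Or.inr ⟨k, rfl⟩, hi⟩, rfl⟩⟩)
    · have := mul_pos (halfPow_pos (n + 2)) (halfPow_pos k)
      have := mem_singleton_iff.1 hk.1
      linarith

theorem ncard_tops (c : ℕ → ℕ) (n : ℕ) : (tops c n).ncard = c n := by
  rw [tops, ncard_image_of_injective _ fun i j h => ?_, ncard_Iio_nat]
  simpa using halfPow_injective (congrArg Prod.snd h)

theorem _root_.componentFrontierCards_comb (c : ℕ → ℕ) :
    componentFrontierCards (comb c) = range c \ {0} := by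
  rw [(isCompact_comb c).isClosed.componentFrontierCards_subtype]
  ext m
  constructor
  · rintro ⟨hm, p, hp, hnt, rfl⟩
    by_cases hteeth : ∃ n, p ∈ tooth n
    · obtain ⟨n, hn⟩ := hteeth
      rw [connectedComponentIn_eq_tooth hn, (isCompact_tooth n).isClosed.closure_eq,
        tooth_inter_closure_diff, ncard_tops] at hm ⊢
      exact ⟨mem_range_self n, hm⟩
    · exact absurd (subsingleton_connectedComponentIn hp (not_exists.1 hteeth))
        hnt.not_subsingleton
  · rintro ⟨⟨n, rfl⟩, hn⟩
    have hp : (halfPow n, (0 : ℝ)) ∈ tooth n := ⟨rfl, le_rfl, (halfPow_pos n).le⟩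
    refine ⟨hn, _, tooth_subset c n hp, ?_, ?_⟩ <;> rw [connectedComponentIn_eq_tooth hp]
    · exact ⟨_, hp, (halfPow n, halfPow n), ⟨rfl, (halfPow_pos n).le, le_rfl⟩,
        by simp [(halfPow_pos n).ne]⟩
    · rw [(isCompact_tooth n).isClosed.closure_eq, tooth_inter_closure_diff, ncard_tops]

end comb

end

theorem range_indicator_add_one_diff_zero (A : Set ℕ) :
    range (A.indicator (· + 1)) \ {0} = (· + 1) '' A := by
  ext m
  simp only [Set.mem_sdiff, mem_range, mem_singleton_iff, mem_image]
  constructor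
  · rintro ⟨⟨n, hn⟩, hm⟩
    by_cases hA : n ∈ A
    · exact ⟨n, hA, by rwa [indicator_of_mem hA] at hn⟩
    · exact absurd (by rwa [indicator_of_notMem hA] at hn) (Ne.symm hm)
  · rintro ⟨n, hA, rfl⟩
    exact ⟨⟨n, indicator_of_mem hA _⟩, n.succ_ne_zero⟩

/-- A countably infinite discrete space `X` has continuum many
pairwise non-homeomorphic metrizable compactifications, each of cardinality
continuum: there is an `ℝ`-indexed family of compact metrizable spaces of
cardinality continuum, each containing a dense homeomorphic copy of `X`, which
are pairwise non-homeomorphic. -/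
theorem stmt_11 (X : Type) [TopologicalSpace X] [DiscreteTopology X]
    [Countable X] [Infinite X] :
    ∃ (K : ℝ → Type) (tK : ∀ r, TopologicalSpace (K r)),
      (∀ r, @CompactSpace (K r) (tK r)) ∧
      (∀ r, @TopologicalSpace.MetrizableSpace (K r) (tK r)) ∧
      (∀ r, Cardinal.mk (K r) = Cardinal.continuum) ∧
      (∀ r, ∃ e : X → K r, @Topology.IsEmbedding X (K r) _ (tK r) e ∧
        @DenseRange (K r) (tK r) X e) ∧
      (∀ r s : ℝ, r ≠ s → ¬ Nonempty (@Homeomorph (K r) (K s) (tK r) (tK s))) := by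
  obtain ⟨f⟩ : Nonempty (ℝ ≃ Set ℕ) := Cardinal.eq.1 <| by
    rw [Cardinal.mk_real, Cardinal.mk_set, Cardinal.mk_nat, Cardinal.two_power_aleph0]
  obtain ⟨g⟩ : Nonempty (X ≃ ℕ) := nonempty_equiv_of_countable
  refine ⟨fun r => natCompactification (comb ((f r).indicator (· + 1))), fun _ => inferInstance,
    fun _ => isCompact_iff_compactSpace.1 isCompact_natCompactification, fun _ => inferInstance,
    fun _ => natCompactification.mk_eq_continuum (comb.mk_eq_continuum _),
    fun _ => ⟨_, (natCompactification.isOpenEmbedding_ofNat_comp g.injective).isEmbedding,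
      natCompactification.denseRange_ofNat.comp g.surjective.denseRange
        continuous_of_discreteTopology⟩, ?_⟩
  rintro r s hrs ⟨h⟩
  have hcards := (natCompactification.remainderHomeomorph h).componentFrontierCards_eq
  rw [componentFrontierCards_comb, componentFrontierCards_comb,
    range_indicator_add_one_diff_zero, range_indicator_add_one_diff_zero,
    (image_injective.2 (add_left_injective 1)).eq_iff] at hcards
  exact hrs (f.injective hcards)
end

section
/- Every open subset U of ℝ whose subspace topology has infinitely many connected components is homeomorphic to the subspace ℝ \ ℤ of ℝ. -/
/-!
An open `U ⊆ ℝ` is locally connected, so its connected components are open, so `U` is the topological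
disjoint union of them; they are countably many because `U` is separable. Each component is a
nonempty open interval of `ℝ`, hence homeomorphic to `ℝ`. So any such `U` with infinitely many
components is homeomorphic to `ℕ × ℝ`, and `ℝ \ ℤ` is one of them: its components are the
intervals `(n, n + 1)`.
-/

open Set Topology

theorem IsOpen.not_isLeast {α : Type*} [TopologicalSpace α] [LinearOrder α] [OrderTopology α]
    [DenselyOrdered α] [NoMinOrder α] {s : Set α} (hs : IsOpen s) {a : α} : ¬IsLeast s a := by
  intro ha
  obtain ⟨x, hxs, hxa⟩ : (s ∩ Iio a).Nonempty :=
    Filter.nonempty_of_mem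
      (Filter.inter_mem (mem_nhdsWithin_of_mem_nhds (hs.mem_nhds ha.1)) self_mem_nhdsWithin)
  exact (ha.2 hxs).not_gt hxa

theorem IsOpen.not_isGreatest {α : Type*} [TopologicalSpace α] [LinearOrder α] [OrderTopology α]
    [DenselyOrdered α] [NoMaxOrder α] {s : Set α} (hs : IsOpen s) {a : α} :
    ¬IsGreatest s a :=
  IsOpen.not_isLeast (α := αᵒᵈ) hs

theorem nonempty_Ioi_homeomorph_real (a : ℝ) : Nonempty (Ioi a ≃ₜ ℝ) := by
  have h : (Homeomorph.addLeft a) '' Ioi 0 = Ioi a := by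
    simp [Homeomorph.coe_addLeft]
  exact ⟨((Homeomorph.addLeft a).image _ |>.trans (.setCongr h)).symm.trans
    Real.expOrderIso.toHomeomorph.symm⟩

theorem nonempty_Iio_homeomorph_real (b : ℝ) : Nonempty (Iio b ≃ₜ ℝ) := by
  obtain ⟨e⟩ := nonempty_Ioi_homeomorph_real (-b)
  have h : (Homeomorph.neg ℝ) '' Ioi (-b) = Iio b := by simp
  exact ⟨((Homeomorph.neg ℝ).image _ |>.trans (.setCongr h)).symm.trans e⟩

theorem nonempty_Ioo_homeomorph_real {a b : ℝ} (hab : a < b) : Nonempty (Ioo a b ≃ₜ ℝ) := by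
  have hk : 0 < (b - a) / Real.pi := div_pos (by linarith) Real.pi_pos
  have h : (affineHomeomorph ((b - a) / Real.pi) ((a + b) / 2) hk.ne') ''
      Ioo (-(Real.pi / 2)) (Real.pi / 2) = Ioo a b := by
    have := Real.pi_pos
    change ((b - a) / Real.pi * · + (a + b) / 2) '' _ = _
    rw [image_affine_Ioo hk]
    congr 1 <;> field_simp <;> ring
  exact ⟨((affineHomeomorph _ _ hk.ne').image _ |>.trans (.setCongr h)).symm.trans
    Real.tanOrderIso.toHomeomorph⟩

theorem IsOpen.nonempty_homeomorph_real {s : Set ℝ} (ho : IsOpen s) (hc : IsPreconnected s)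
    (hne : s.Nonempty) : Nonempty (s ≃ₜ ℝ) := by
  obtain ⟨x, hx⟩ := hne
  have hmem := hc.mem_intervals
  simp only [mem_insert_iff, mem_singleton_iff] at hmem
  rcases hmem with hs | hs | hs | hs | hs | hs | hs | hs | hs | hs <;> rw [hs] at ho hx ⊢
  · exact (ho.not_isLeast (isLeast_Icc (hx.1.trans hx.2))).elim
  · exact (ho.not_isLeast (isLeast_Ico (hx.1.trans_lt hx.2))).elim
  · exact (ho.not_isGreatest (isGreatest_Ioc (hx.1.trans_le hx.2))).elim
  · exact nonempty_Ioo_homeomorph_real (hx.1.trans hx.2)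
  · exact (ho.not_isLeast isLeast_Ici).elim
  · exact nonempty_Ioi_homeomorph_real _
  · exact (ho.not_isGreatest isGreatest_Iic).elim
  · exact nonempty_Iio_homeomorph_real _
  · exact ⟨Homeomorph.Set.univ ℝ⟩
  · exact hx.elim

theorem Topology.IsOpenEmbedding.nonempty_homeomorph_real {X : Type*} [TopologicalSpace X]
    [ConnectedSpace X] {f : X → ℝ} (hf : IsOpenEmbedding f) : Nonempty (X ≃ₜ ℝ) :=
  let ⟨e⟩ := hf.isOpen_range.nonempty_homeomorph_real (isPreconnected_range hf.continuous)
    (range_nonempty f)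
  ⟨hf.toHomeomorph.trans e⟩

section Components

variable {X : Type*} [TopologicalSpace X]

def Homeomorph.sigmaFiberOfContinuous {Y : Type*} [TopologicalSpace Y] [DiscreteTopology Y]
    {f : X → Y} (hf : Continuous f) : (Σ y, {x // f x = y}) ≃ₜ X :=
  (Equiv.sigmaFiberEquiv f).toHomeomorphOfContinuousOpen
    (continuous_sigma fun _ => continuous_subtype_val)
    (isOpenMap_sigma.2 fun y => (hf.isOpen_preimage {y} (isOpen_discrete _)).isOpenMap_subtype_val)

theorem ConnectedComponents.connectedSpace_fiber (c : ConnectedComponents X) :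
    ConnectedSpace {x : X // ConnectedComponents.mk x = c} := by
  obtain ⟨x, rfl⟩ := ConnectedComponents.surjective_coe c
  have h : {y : X | ConnectedComponents.mk y = ConnectedComponents.mk x} = connectedComponent x :=
    connectedComponents_preimage_singleton
  exact isConnected_iff_connectedSpace.1 (h ▸ isConnected_connectedComponent :)

theorem ConnectedComponents.countable [LocallyConnectedSpace X]
    [TopologicalSpace.SeparableSpace X] : Countable (ConnectedComponents X) :=
  TopologicalSpace.separableSpace_iff_countable.1 isQuotientMap_coe.separableSpace

end Components

theorem IsOpen.nonempty_homeomorph_sigma_nat_real {U : Set ℝ} (hU : IsOpen U)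
    [Infinite (ConnectedComponents U)] : Nonempty (U ≃ₜ Σ _ : ℕ, ℝ) := by
  have := hU.locallyConnectedSpace
  have := ConnectedComponents.countable (X := U)
  obtain ⟨e⟩ : Nonempty (ConnectedComponents U ≃ ℕ) := nonempty_equiv_of_countable
  have φ (c : ConnectedComponents U) : {x : U // ConnectedComponents.mk x = c} ≃ₜ ℝ :=
    have := ConnectedComponents.connectedSpace_fiber c
    have hc : IsOpenEmbedding fun x : {x : U // ConnectedComponents.mk x = c} => (x.1 : ℝ) :=
      hU.isOpenEmbedding_subtypeVal.comp ((isOpen_discrete {c}).preimage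
        ConnectedComponents.continuous_coe).isOpenEmbedding_subtypeVal
    hc.nonempty_homeomorph_real.some
  exact ⟨(Homeomorph.sigmaFiberOfContinuous ConnectedComponents.continuous_coe).symm.trans
    ((IsHomeomorph.sigmaMap e.bijective fun c => (φ c).isHomeomorph).homeomorph _)⟩

theorem Set.OrdConnected.floor_eq_of_disjoint_range_intCast {α : Type*} [Ring α] [LinearOrder α]
    [IsStrictOrderedRing α] [FloorRing α] {s : Set α} (hs : s.OrdConnected)
    (hZ : Disjoint s (range ((↑) : ℤ → α))) {x y : α} (hx : x ∈ s) (hy : y ∈ s) (hxy : x ≤ y) :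
    ⌊x⌋ = ⌊y⌋ := by
  refine le_antisymm (Int.floor_mono hxy) (not_lt.1 fun hlt => ?_)
  have hmem : (⌊y⌋ : α) ∈ s := hs.out hx hy
    ⟨(Int.lt_floor_add_one x).le.trans (by exact_mod_cast hlt), Int.floor_le y⟩
  exact hZ.ne_of_mem hmem ⟨⌊y⌋, rfl⟩ rfl

theorem infinite_connectedComponents_compl_range_intCast :
    Infinite (ConnectedComponents ((range ((↑) : ℤ → ℝ))ᶜ : Set ℝ)) := by
  have hfloor (n : ℤ) : ⌊(n + 1 / 2 : ℝ)⌋ = n := by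
    rw [Int.floor_eq_iff]; constructor <;> linarith
  have hmem (n : ℤ) : (n + 1 / 2 : ℝ) ∈ (range ((↑) : ℤ → ℝ))ᶜ := by
    rintro ⟨m, hm⟩
    obtain rfl : m = n := by rw [← Int.floor_intCast (R := ℝ) m, hm, hfloor]
    linarith
  refine Infinite.of_injective (fun n : ℤ => ConnectedComponents.mk ⟨_, hmem n⟩) fun n m hnm => ?_
  wlog hle : n ≤ m generalizing n m
  · exact (this m n hnm.symm (le_of_not_ge hle)).symm
  rw [ConnectedComponents.coe_eq_coe] at hnm
  have hT : IsPreconnected (Subtype.val ''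
      connectedComponent (⟨_, hmem n⟩ : ↥(range ((↑) : ℤ → ℝ))ᶜ)) :=
    isPreconnected_connectedComponent.image _ continuous_subtype_val.continuousOn
  have := hT.ordConnected.floor_eq_of_disjoint_range_intCast
    (subset_compl_iff_disjoint_right.1 (by rintro _ ⟨z, -, rfl⟩; exact z.2))
    ⟨_, mem_connectedComponent, rfl⟩ ⟨_, hnm.symm ▸ mem_connectedComponent, rfl⟩
    (show (n + 1 / 2 : ℝ) ≤ m + 1 / 2 by gcongr)
  simpa [hfloor] using this

/-- Every open subset of `ℝ` with infinitely many connected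
components is homeomorphic to `ℝ \ ℤ`. -/
theorem stmt_16 (U : Set ℝ) (hU : IsOpen U)
    (h : Infinite (ConnectedComponents ↥U)) :
    Nonempty (↥U ≃ₜ ↥((Set.range ((↑) : ℤ → ℝ))ᶜ)) := by
  have hV : IsOpen (range ((↑) : ℤ → ℝ))ᶜ :=
    Int.isClosedEmbedding_coe_real.isClosed_range.isOpen_compl
  have := infinite_connectedComponents_compl_range_intCast
  obtain ⟨eU⟩ := hU.nonempty_homeomorph_sigma_nat_real
  obtain ⟨eV⟩ := hV.nonempty_homeomorph_sigma_nat_real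
  exact ⟨eU.trans eV.symm⟩
end

section
/- There exists a family of totally disconnected subsets of ℝ that has cardinality 2^𝔠 (where 𝔠 is the cardinality of the continuum) and whose members are pairwise non-homeomorphic as topological subspaces of ℝ. -/
/-!
There are `2 ^ 𝔠` sets of irrationals, and each of them is totally disconnected because the
rationals are dense in its complement. On the other hand a subspace of `ℝ` homeomorphic to a
given `Y ⊆ ℝ` is the range of a continuous map `Y → ℝ`, which is determined by its values on a
countable dense subset of `Y`; so every homeomorphism class contains at most `𝔠 ^ ℵ₀ = 𝔠` sets.
Choosing one set of irrationals from each class therefore still leaves `2 ^ 𝔠` of them.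
-/

open Cardinal Set TopologicalSpace

theorem Cardinal.mk_continuousMap_le_pow_aleph0 {Y Z : Type*} [TopologicalSpace Y]
    [SeparableSpace Y] [TopologicalSpace Z] [T2Space Z] [Nonempty Z] :
    #C(Y, Z) ≤ lift #Z ^ ℵ₀ := by
  obtain ⟨s, hs, hsd⟩ := exists_countable_dense Y
  have hinj : Function.Injective fun f : C(Y, Z) => f ∘ ((↑) : s → Y) := fun f g hfg =>
    ContinuousMap.ext <| congrFun <| Continuous.ext_on hsd f.continuous g.continuous
      fun y hy => congrFun hfg ⟨y, hy⟩
  calc #C(Y, Z) ≤ #(s → Z) := mk_le_of_injective hinj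
    _ = lift #Z ^ lift #s := mk_arrow _ _
    _ ≤ lift #Z ^ ℵ₀ := power_le_power_left (by simp) (by simpa using hs.le_aleph0)

theorem Setoid.exists_subset_pairwise_not_rel_of_mk_class_le {α : Type*} (r : Setoid α)
    (S : Set α) {μ : Cardinal} (hμ : ℵ₀ ≤ μ) (hμS : μ < #S) (hclass : ∀ a, #{b | r b a} ≤ μ) :
    ∃ T ⊆ S, #T = #S ∧ T.Pairwise fun a b => ¬ r a b := by
  let rS := r.comap ((↑) : S → α)
  have hfiber : ∀ q : Quotient rS, #(Quotient.mk rS ⁻¹' {q}) ≤ μ := by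
    intro q
    let f : Quotient.mk rS ⁻¹' {q} → {b | r b q.out} :=
      fun x => ⟨x.1, Quotient.exact (s := rS) (x.2.trans q.out_eq.symm)⟩
    have hf : Function.Injective f := fun _ _ h => by simpa [f, Subtype.ext_iff] using h
    exact (mk_le_of_injective hf).trans (hclass _)
  have hS : #S ≤ #(Quotient rS) := by
    by_contra! hlt
    exact (mk_le_mk_mul_of_mk_preimage_le _ hfiber).not_gt <|
      mul_lt_of_lt (hμ.trans hμS.le) hlt hμS
  have hinj : Function.Injective fun q : Quotient rS => (q.out : α) :=
    Subtype.val_injective.comp Quotient.out_injective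
  refine ⟨range fun q : Quotient rS => (q.out : α), ?_, ?_, ?_⟩
  · rintro _ ⟨q, rfl⟩
    exact q.out.2
  · rw [mk_range_eq _ hinj]
    exact le_antisymm mk_quotient_le hS
  · rintro _ ⟨q, rfl⟩ _ ⟨q', rfl⟩ hne hrel
    exact hne (by rw [(Quotient.out_equiv_out (s := rS)).mp hrel])

theorem isTotallyDisconnected_of_dense_compl {α : Type*} [ConditionallyCompleteLinearOrder α]
    [DenselyOrdered α] [TopologicalSpace α] [OrderTopology α] {s : Set α} (hs : Dense sᶜ) :
    IsTotallyDisconnected s :=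
  isTotallyDisconnected_iff_lt.2 fun _ _ _ _ hxy => hs.exists_between hxy

def homeomorphicSetoid (X : Type*) [TopologicalSpace X] : Setoid (Set X) where
  r s t := Nonempty (s ≃ₜ t)
  iseqv := ⟨fun _ => ⟨.refl _⟩, fun ⟨e⟩ => ⟨e.symm⟩, fun ⟨e⟩ ⟨e'⟩ => ⟨e.trans e'⟩⟩

theorem mk_setOf_homeomorphic_le_continuum (Y : Type) [TopologicalSpace Y] [SeparableSpace Y] :
    #{X : Set ℝ | Nonempty (X ≃ₜ Y)} ≤ 𝔠 := by
  have hsub : {X : Set ℝ | Nonempty (X ≃ₜ Y)} ⊆ range fun f : C(Y, ℝ) => range f := by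
    rintro X ⟨e⟩
    exact ⟨⟨(↑) ∘ e.symm, by fun_prop⟩, by simp [e.symm.surjective.range_comp]⟩
  calc #{X : Set ℝ | Nonempty (X ≃ₜ Y)}
      ≤ #(range fun f : C(Y, ℝ) => range f) := mk_le_mk_of_subset hsub
    _ ≤ #C(Y, ℝ) := mk_range_le
    _ ≤ 𝔠 := by
      simpa [mk_real, continuum_power_aleph0] using mk_continuousMap_le_pow_aleph0 (Y := Y) (Z := ℝ)

theorem mk_setOf_irrational : #{x : ℝ | Irrational x} = 𝔠 := by
  have hQ : #(range ((↑) : ℚ → ℝ)) < #ℝ := by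
    simpa [mk_real] using (countable_range ((↑) : ℚ → ℝ)).le_aleph0.trans_lt aleph0_lt_continuum
  exact (mk_compl_of_infinite _ hQ).trans mk_real

/-- There is a family of totally disconnected subsets of `ℝ`
of cardinality `2^𝔠` whose members are pairwise non-homeomorphic. -/
theorem stmt_17 :
    ∃ 𝓕 : Set (Set ℝ),
      Cardinal.mk 𝓕 = 2 ^ Cardinal.continuum ∧
      (∀ X ∈ 𝓕, IsTotallyDisconnected X) ∧
      (∀ X ∈ 𝓕, ∀ Y ∈ 𝓕, X ≠ Y → ¬ Nonempty (↥X ≃ₜ ↥Y)) := by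
  have hS : #(𝒫 {x : ℝ | Irrational x}) = 2 ^ 𝔠 := by rw [mk_powerset, mk_setOf_irrational]
  obtain ⟨𝓕, h𝓕S, h𝓕, hpair⟩ :=
    (homeomorphicSetoid ℝ).exists_subset_pairwise_not_rel_of_mk_class_le
      (𝒫 {x : ℝ | Irrational x}) aleph0_le_continuum (hS ▸ cantor 𝔠)
      fun Y => mk_setOf_homeomorphic_le_continuum Y
  refine ⟨𝓕, h𝓕.trans hS, fun X hX => ?_, hpair⟩
  refine isTotallyDisconnected_of_dense_compl <| Rat.denseRange_cast.mono ?_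
  rintro _ ⟨q, rfl⟩ hqX
  exact (h𝓕S hX hqX).ne_rat q rfl
end

section
/- There exists a family of discrete subsets of ℝ that has the cardinality of the continuum and such that for any two distinct members D, E of the family there is no strictly increasing bijection from D onto E. -/
/-!
For `A ⊆ ℕ` let `codeSet A` be the concatenation over `n` of blocks of order type
`ω + 1 + 1 + ω*`, or `ω + 1 + ω*` when `n ∈ A`: a sequence increasing to `4n + 1`, the point
`4n + 5/4` unless `n ∈ A`, the point `4n + 3/2`, and a sequence decreasing to `4n + 2`.
The set is discrete since the accumulation points `4n + 1`, `4n + 2` are left out.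
The points without an immediate successor are exactly the points `4n + 3/2`, which form an
`ω`-sequence, so an order isomorphism `codeSet A ≃o codeSet B` fixes each of them; and `4n + 3/2`
has an immediate predecessor iff `n ∉ A`. Hence `A` is recovered from the order type.
-/

open Set Order

section LinearOrder

variable {α β : Type*} [LinearOrder α] [LinearOrder β]

theorem OrderIso.isSuccPrelimit_apply_iff (e : α ≃o β) {a : α} :
    IsSuccPrelimit (e a) ↔ IsSuccPrelimit a := by
  simp only [IsSuccPrelimit, e.surjective.forall, apply_covBy_apply_iff]

theorem OrderIso.isPredPrelimit_apply_iff (e : α ≃o β) {a : α} :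
    IsPredPrelimit (e a) ↔ IsPredPrelimit a := by
  simp only [IsPredPrelimit, e.surjective.forall, apply_covBy_apply_iff]

theorem Set.Ioo_inter_subset_singleton {s : Set α} {a x b : α}
    (ha : Disjoint (Ioo a x) s) (hb : Disjoint (Ioo x b) s) : Ioo a b ∩ s ⊆ {x} := by
  rintro z ⟨⟨haz, hzb⟩, hz⟩
  rcases lt_trichotomy z x with hzx | rfl | hxz
  · exact (disjoint_left.1 ha ⟨haz, hzx⟩ hz).elim
  · rfl
  · exact (disjoint_left.1 hb ⟨hxz, hzb⟩ hz).elim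

end LinearOrder

namespace RigidDiscrete

noncomputable section

def rising (k : ℕ) : ℝ := 1 - 1 / (k + 2)

def falling (k : ℕ) : ℝ := 2 + 1 / (k + 2)

theorem rising_strictMono : StrictMono rising := fun a b hab => by
  have : (a : ℝ) < b := by exact_mod_cast hab
  unfold rising; gcongr

theorem falling_strictAnti : StrictAnti falling := fun a b hab => by
  have : (a : ℝ) < b := by exact_mod_cast hab
  unfold falling; gcongr

@[simp] theorem rising_zero : rising 0 = 1 / 2 := by norm_num [rising]

@[simp] theorem falling_zero : falling 0 = 5 / 2 := by norm_num [falling]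

theorem rising_lt_one (k : ℕ) : rising k < 1 := by
  unfold rising; have : (0 : ℝ) < 1 / (k + 2) := by positivity
  linarith

theorem two_lt_falling (k : ℕ) : 2 < falling k := by
  unfold falling; have : (0 : ℝ) < 1 / (k + 2) := by positivity
  linarith

theorem half_le_rising (k : ℕ) : 1 / 2 ≤ rising k :=
  rising_zero ▸ rising_strictMono.monotone k.zero_le

theorem falling_le (k : ℕ) : falling k ≤ 5 / 2 :=
  falling_zero ▸ falling_strictAnti.antitone k.zero_le

theorem exists_lt_rising {x : ℝ} (hx : x < 1) : ∃ k, x < rising k := by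
  obtain ⟨k, hk⟩ := exists_nat_one_div_lt (sub_pos.2 hx)
  refine ⟨k, ?_⟩
  have : 1 / ((k : ℝ) + 2) < 1 / (k + 1) := by gcongr; linarith
  unfold rising; linarith

theorem exists_falling_lt {x : ℝ} (hx : 2 < x) : ∃ k, falling k < x := by
  obtain ⟨k, hk⟩ := exists_nat_one_div_lt (sub_pos.2 hx)
  refine ⟨k, ?_⟩
  have : 1 / ((k : ℝ) + 2) < 1 / (k + 1) := by gcongr; linarith
  unfold falling; linarith

def block (P : Prop) : Set ℝ :=
  {t | (∃ k, rising k = t) ∨ (P ∧ t = 5 / 4) ∨ t = 3 / 2 ∨ ∃ k, falling k = t}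

variable {P : Prop}

theorem rising_mem_block (k : ℕ) : rising k ∈ block P := Or.inl ⟨k, rfl⟩

theorem five_fourths_mem_block (hP : P) : 5 / 4 ∈ block P := Or.inr (Or.inl ⟨hP, rfl⟩)

theorem three_halves_mem_block : 3 / 2 ∈ block P := Or.inr (Or.inr (Or.inl rfl))

theorem falling_mem_block (k : ℕ) : falling k ∈ block P := Or.inr (Or.inr (Or.inr ⟨k, rfl⟩))

theorem block_subset_Icc : block P ⊆ Icc (1 / 2) (5 / 2) := by
  rintro t (⟨k, rfl⟩ | ⟨-, rfl⟩ | rfl | ⟨k, rfl⟩)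
  · exact ⟨half_le_rising k, by linarith [rising_lt_one k]⟩
  · norm_num
  · norm_num
  · exact ⟨by linarith [two_lt_falling k], falling_le k⟩

theorem block_inter_Ico_subset : block P ∩ Ico 1 (3 / 2) ⊆ {t | P ∧ t = 5 / 4} := by
  rintro t ⟨⟨k, rfl⟩ | ht | rfl | ⟨k, rfl⟩, h1, h2⟩
  · linarith [rising_lt_one k]
  · exact ht
  · norm_num at h2
  · linarith [two_lt_falling k]

theorem disjoint_Ioc_block : Disjoint (Ioc (3 / 2) 2) (block P) := by
  refine disjoint_left.2 ?_
  rintro t ⟨h1, h2⟩ (⟨k, rfl⟩ | ⟨-, rfl⟩ | rfl | ⟨k, rfl⟩)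
  · linarith [rising_lt_one k]
  · norm_num at h1
  · norm_num at h1
  · linarith [two_lt_falling k]

theorem disjoint_Ioo_rising_block (k : ℕ) :
    Disjoint (Ioo (rising k) (rising (k + 1))) (block P) := by
  refine disjoint_left.2 ?_
  rintro t ⟨h1, h2⟩ (⟨j, rfl⟩ | ⟨-, rfl⟩ | rfl | ⟨j, rfl⟩)
  · rw [rising_strictMono.lt_iff_lt] at h1 h2
    omega
  · linarith [rising_lt_one (k + 1)]
  · linarith [rising_lt_one (k + 1)]
  · linarith [rising_lt_one (k + 1), two_lt_falling j]

theorem disjoint_Ioo_falling_block (k : ℕ) :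
    Disjoint (Ioo (falling (k + 1)) (falling k)) (block P) := by
  refine disjoint_left.2 ?_
  rintro t ⟨h1, h2⟩ (⟨j, rfl⟩ | ⟨-, rfl⟩ | rfl | ⟨j, rfl⟩)
  · linarith [rising_lt_one j, two_lt_falling (k + 1)]
  · linarith [two_lt_falling (k + 1)]
  · linarith [two_lt_falling (k + 1)]
  · rw [falling_strictAnti.lt_iff_gt] at h1 h2
    omega

theorem disjoint_Iio_block : Disjoint (Iio (1 / 2)) (block P) :=
  disjoint_left.2 fun _ hu hub => not_le.2 hu (block_subset_Icc hub).1

theorem disjoint_Ioi_block : Disjoint (Ioi (5 / 2)) (block P) :=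
  disjoint_left.2 fun _ hu hub => not_le.2 hu (block_subset_Icc hub).2

theorem disjoint_Ioo_block_of_five_fourths_notMem {a b : ℝ} (ha : 1 ≤ a) (hb : b ≤ 3 / 2)
    (h : 5 / 4 ∉ Ioo a b) : Disjoint (Ioo a b) (block P) :=
  disjoint_left.2 fun _ hu hub =>
    h ((block_inter_Ico_subset ⟨hub, by linarith [hu.1], by linarith [hu.2]⟩).2 ▸ hu)

theorem block_isolated {t : ℝ} (ht : t ∈ block P) :
    ∃ a < t, ∃ b > t, -3 / 2 ≤ a ∧ b ≤ 7 / 2 ∧ Ioo a b ∩ block P ⊆ {t} := by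
  rcases ht with ⟨k | k, rfl⟩ | ⟨-, rfl⟩ | rfl | ⟨k | k, rfl⟩
  · refine ⟨-3 / 2, by norm_num, rising 1, rising_strictMono one_pos, le_rfl,
      by linarith [rising_lt_one 1], Ioo_inter_subset_singleton ?_ (disjoint_Ioo_rising_block 0)⟩
    simpa using disjoint_Iio_block.mono_left Ioo_subset_Iio_self
  · refine ⟨rising k, rising_strictMono k.lt_succ_self, rising (k + 2),
      rising_strictMono (k + 1).lt_succ_self, by linarith [half_le_rising k],
      by linarith [rising_lt_one (k + 2)],
      Ioo_inter_subset_singleton (disjoint_Ioo_rising_block k)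
        (disjoint_Ioo_rising_block (k + 1))⟩
  · refine ⟨1, by norm_num, 3 / 2, by norm_num, by norm_num, by norm_num,
      Ioo_inter_subset_singleton
        (disjoint_Ioo_block_of_five_fourths_notMem le_rfl (by norm_num) (by simp))
        (disjoint_Ioo_block_of_five_fourths_notMem (by norm_num) le_rfl (by simp))⟩
  · refine ⟨5 / 4, by norm_num, 2, by norm_num, by norm_num, by norm_num,
      Ioo_inter_subset_singleton
        (disjoint_Ioo_block_of_five_fourths_notMem (by norm_num) le_rfl (by simp))
        (disjoint_Ioc_block.mono_left Ioo_subset_Ioc_self)⟩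
  · refine ⟨falling 1, falling_strictAnti one_pos, 7 / 2, by norm_num,
      by linarith [two_lt_falling 1], le_rfl,
      Ioo_inter_subset_singleton (disjoint_Ioo_falling_block 0) ?_⟩
    simpa using disjoint_Ioi_block.mono_left Ioo_subset_Ioi_self
  · refine ⟨falling (k + 2), falling_strictAnti (k + 1).lt_succ_self, falling k,
      falling_strictAnti k.lt_succ_self, by linarith [two_lt_falling (k + 2)],
      by linarith [falling_le k],
      Ioo_inter_subset_singleton (disjoint_Ioo_falling_block (k + 1))
        (disjoint_Ioo_falling_block k)⟩

def codeSet (A : Set ℕ) : Set ℝ := {x | ∃ n : ℕ, x - 4 * n ∈ block (n ∉ A)}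

variable {A : Set ℕ} {n : ℕ}

theorem add_mem_codeSet {t : ℝ} (ht : t ∈ block (n ∉ A)) : t + 4 * n ∈ codeSet A :=
  ⟨n, by rwa [add_sub_cancel_right]⟩

def pivot (A : Set ℕ) (n : ℕ) : codeSet A :=
  ⟨3 / 2 + 4 * n, add_mem_codeSet three_halves_mem_block⟩

theorem pivot_strictMono (A : Set ℕ) : StrictMono (pivot A) := fun m n hmn => by
  have : (m : ℝ) < n := by exact_mod_cast hmn
  show 3 / 2 + 4 * (m : ℝ) < 3 / 2 + 4 * n
  linarith

theorem sub_mem_block {x : ℝ} (hx : x ∈ codeSet A) (h₁ : -3 / 2 < x - 4 * n)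
    (h₂ : x - 4 * n < 7 / 2) : x - 4 * n ∈ block (n ∉ A) := by
  obtain ⟨m, hm⟩ := hx
  have ⟨hm₁, hm₂⟩ := block_subset_Icc hm
  have hnm : n < m + 1 := by exact_mod_cast (by linarith : (n : ℝ) < m + 1)
  have hmn : m < n + 1 := by exact_mod_cast (by linarith : (m : ℝ) < n + 1)
  obtain rfl : m = n := by omega
  exact hm

theorem discreteTopology_codeSet (A : Set ℕ) : DiscreteTopology (codeSet A) := by
  refine discreteTopology_subtype_iff'.2 fun x ⟨n, hx⟩ => ?_
  obtain ⟨a, hat, b, htb, ha, hb, hab⟩ := block_isolated hx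
  refine ⟨Ioo (a + 4 * n) (b + 4 * n), isOpen_Ioo, subset_antisymm ?_ ?_⟩
  · rintro z ⟨⟨hz₁, hz₂⟩, hz⟩
    have := hab ⟨⟨by linarith, by linarith⟩, sub_mem_block hz (by linarith) (by linarith)⟩
    simpa using this
  · rintro _ rfl
    exact ⟨⟨by linarith, by linarith⟩, n, hx⟩

theorem covBy_of_disjoint_block {s t : ℝ} (hs : s + 4 * n ∈ codeSet A)
    (ht : t + 4 * n ∈ codeSet A) (hst : s < t) (hs' : -3 / 2 ≤ s) (ht' : t ≤ 7 / 2)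
    (h : Disjoint (Ioo s t) (block (n ∉ A))) :
    (⟨s + 4 * n, hs⟩ : codeSet A) ⋖ ⟨t + 4 * n, ht⟩ := by
  refine ⟨by simpa using hst, fun z (hsz : s + 4 * n < z) (hzt : z < t + 4 * n) => ?_⟩
  exact disjoint_left.1 h ⟨by linarith, by linarith⟩
    (sub_mem_block z.2 (by linarith) (by linarith))

theorem isPredPrelimit_pivot (A : Set ℕ) (n : ℕ) : IsPredPrelimit (pivot A n) := by
  rintro ⟨y, hy⟩ ⟨(hpy : 3 / 2 + 4 * n < y), hcov⟩
  have hy₂ : 2 < y - 4 * n := by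
    by_contra! hle
    exact disjoint_left.1 disjoint_Ioc_block ⟨by linarith, hle⟩
      (sub_mem_block hy (by linarith) (by linarith))
  obtain ⟨k, hk⟩ := exists_falling_lt hy₂
  refine hcov (c := ⟨falling k + 4 * n, add_mem_codeSet (falling_mem_block k)⟩) ?_ ?_
  · show 3 / 2 + 4 * n < falling k + 4 * n
    linarith [two_lt_falling k]
  · show falling k + 4 * n < y
    linarith

theorem isPredPrelimit_iff_mem_range_pivot (x : codeSet A) :
    IsPredPrelimit x ↔ x ∈ range (pivot A) := by
  refine ⟨fun hx => ?_, by rintro ⟨n, rfl⟩; exact isPredPrelimit_pivot A n⟩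
  obtain ⟨x, n, hxn⟩ := x
  obtain ⟨t, ht, rfl⟩ : ∃ t ∈ block (n ∉ A), x = t + 4 * n := ⟨_, hxn, by ring⟩
  rcases ht with ⟨k, rfl⟩ | ⟨hn, rfl⟩ | rfl | ⟨k | k, rfl⟩
  · exact (hx _ (covBy_of_disjoint_block _ (add_mem_codeSet (rising_mem_block (k + 1)))
      (rising_strictMono k.lt_succ_self) (by linarith [half_le_rising k])
      (by linarith [rising_lt_one (k + 1)]) (disjoint_Ioo_rising_block k))).elim
  · exact (hx _ (covBy_of_disjoint_block _ (add_mem_codeSet three_halves_mem_block)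
      (by norm_num) (by norm_num) (by norm_num)
      (disjoint_Ioo_block_of_five_fourths_notMem (by norm_num) le_rfl (by simp)))).elim
  · exact ⟨n, rfl⟩
  · -- the last point `5/2 + 4n` of block `n` is covered by the first point of block `n + 1`
    have hmem : -3 / 2 + 4 * ((n + 1 : ℕ) : ℝ) ∈ codeSet A := by
      convert add_mem_codeSet (falling_mem_block 0) using 1
      push_cast; norm_num; ring
    have hcov := covBy_of_disjoint_block hmem (add_mem_codeSet (rising_mem_block 0))
      (by norm_num) le_rfl (by norm_num)
      (by rw [rising_zero]; exact disjoint_Iio_block.mono_left Ioo_subset_Iio_self)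
    exact (hx _ (by convert hcov using 2; push_cast; norm_num; ring)).elim
  · exact (hx _ (covBy_of_disjoint_block _ (add_mem_codeSet (falling_mem_block k))
      (falling_strictAnti k.lt_succ_self) (by linarith [two_lt_falling (k + 1)])
      (by linarith [falling_le k]) (disjoint_Ioo_falling_block k))).elim

theorem isSuccPrelimit_pivot_iff : IsSuccPrelimit (pivot A n) ↔ n ∈ A := by
  refine ⟨fun h => by_contra fun hn => h ⟨5 / 4 + 4 * n, ?_⟩ ?_, fun hn => ?_⟩
  · exact add_mem_codeSet (five_fourths_mem_block hn)
  · exact covBy_of_disjoint_block (add_mem_codeSet (five_fourths_mem_block hn)) _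
      (by norm_num) (by norm_num) (by norm_num)
      (disjoint_Ioo_block_of_five_fourths_notMem (by norm_num) le_rfl (by simp))
  rintro ⟨y, hy⟩ ⟨(hyp : y < 3 / 2 + 4 * n), hcov⟩
  have hy₁ : y - 4 * n < 1 := by
    by_contra! hle
    exact (block_inter_Ico_subset
      ⟨sub_mem_block hy (by linarith) (by linarith), hle, by linarith⟩).1 hn
  obtain ⟨k, hk⟩ := exists_lt_rising hy₁
  refine hcov (c := ⟨rising k + 4 * n, add_mem_codeSet (rising_mem_block k)⟩) ?_ ?_
  · show y < rising k + 4 * n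
    linarith
  · show rising k + 4 * n < 3 / 2 + 4 * n
    linarith [rising_lt_one k]

theorem eq_of_orderIso {A B : Set ℕ} (e : codeSet A ≃o codeSet B) : A = B := by
  have he : e ∘ pivot A = pivot B := by
    refine ((e.strictMono.comp (pivot_strictMono A)).range_inj (pivot_strictMono B)).1 ?_
    ext y
    obtain ⟨x, rfl⟩ := e.surjective y
    rw [range_comp, e.injective.mem_set_image, ← isPredPrelimit_iff_mem_range_pivot,
      ← isPredPrelimit_iff_mem_range_pivot, e.isPredPrelimit_apply_iff]
  ext n
  rw [← isSuccPrelimit_pivot_iff (A := A), ← isSuccPrelimit_pivot_iff (A := B),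
    ← congrFun he n, Function.comp_apply, e.isSuccPrelimit_apply_iff]

theorem codeSet_injective : Function.Injective codeSet := fun _ _ h =>
  eq_of_orderIso (OrderIso.setCongr _ _ h)

theorem mk_range_codeSet : Cardinal.mk (range codeSet) = Cardinal.continuum := by
  rw [Cardinal.mk_range_eq codeSet codeSet_injective, Cardinal.mk_set, Cardinal.mk_nat,
    Cardinal.two_power_aleph0]

end

end RigidDiscrete

/-- There is a family of discrete subsets of `ℝ`, of cardinality
continuum, no two distinct members of which are order-isomorphic. -/
theorem stmt_19 :
    ∃ 𝓓 : Set (Set ℝ),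
      Cardinal.mk 𝓓 = Cardinal.continuum ∧
      (∀ D ∈ 𝓓, DiscreteTopology ↥D) ∧
      (∀ D ∈ 𝓓, ∀ E ∈ 𝓓, D ≠ E →
        ¬ ∃ f : ↥D → ↥E, Function.Bijective f ∧ StrictMono f) := by
  refine ⟨range RigidDiscrete.codeSet, RigidDiscrete.mk_range_codeSet, ?_, ?_⟩
  · rintro _ ⟨A, rfl⟩
    exact RigidDiscrete.discreteTopology_codeSet A
  · rintro _ ⟨A, rfl⟩ _ ⟨B, rfl⟩ hne ⟨f, hf, hmono⟩
    exact hne (congrArg _ (RigidDiscrete.eq_of_orderIso (hmono.orderIsoOfSurjective f hf.2)))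
end
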